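/- arXiv:1309.1198 — 6 statements merged into one kernel-verified Lean document; each statement's English description precedes it below -/
import Mathlib

section
/- Let A be a commutative ring and X = Spec A its prime spectrum with the Zariski topology. The following are equivalent: (i) the set X^c of closed points of X is closed in X, and every open cover of X splits, i.e. for every family (U_i) of open subsets of X with union X, the canonical map from the topological disjoint union ⨿_i U_i to X admits a continuous section; (ii) X^c is closed in X and every connected component of X contains exactly one closed point. Moreover, when these conditions hold, the composite of the inclusion X^c ↪ X (with the subspace topology on X^c) and the quotient map X → π₀(X) to the space of connected components is a homeomorphism. -/
/-
`Spec A` is a spectral space, and the argument works for any compact, quasi-separated T₀ space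
with a basis of compact opens. In such a space the connected component of `x` is the intersection
of the clopen sets containing `x`: if it split into closed pieces `Z₁, Z₂`, compact opens
`U₁ ⊇ Z₁`, `U₂ ⊇ Z₂` (missing `Z₂`, resp. `Z₁`) have compact intersection, so a clopen neighbourhood
of `x` inside `U₁ ∪ U₂` avoiding `U₁ ∩ U₂` would already separate them. Hence an open set containing
a component contains a clopen neighbourhood of it, and `π₀(X)` is Hausdorff.

A cover `(U i)` splits iff some locally constant `k` has `x ∈ U (k x)` for all `x`. Two distinct
closed points `x, y` of one component are then impossible: for the cover `{x}ᶜ, {y}ᶜ`, `k` would be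
constant on the component. Conversely, if each component has a unique closed point `y`, every
point of the component specializes to `y`, so the component lies in any open set containing `y`,
hence so does a clopen neighbourhood; finitely many of these give a locally constant `k`. Finally
`X^c → π₀(X)` is a continuous bijection from a compact space onto a Hausdorff space.
-/

universe u

/-- The set of closed points of a topological space (named to avoid clashing with Mathlib). -/
def spectrumClosedPoints (X : Type u) [TopologicalSpace X] : Set X :=
  {x : X | IsClosed ({x} : Set X)}

/-- A topological space has *split open covers* if for every open cover `(U i)` the canonical map
from the topological disjoint union `Σ i, U i` admits a continuous section. -/
def SplitsOpenCovers (X : Type u) [TopologicalSpace X] : Prop :=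
  ∀ (ι : Type u) (U : ι → Set X), (∀ i, IsOpen (U i)) → (⋃ i, U i) = Set.univ →
    ∃ s : X → Σ i, (U i : Set X), Continuous s ∧ ∀ x : X, ((s x).2 : X) = x

open Set

section General

variable {X : Type*} [TopologicalSpace X]

theorem exists_specializes_isClosed_singleton [T0Space X] [CompactSpace X] (x : X) :
    ∃ y, x ⤳ y ∧ IsClosed {y} := by
  obtain ⟨y, hy, hyc⟩ := isClosed_closure.exists_closed_singleton (singleton_nonempty x).closure
  exact ⟨y, specializes_iff_mem_closure.mpr hy, hyc⟩

theorem IsCompact.exists_isClopen_disjoint_of_disjoint_iInter_isClopen {K : Set X} {x : X}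
    (hK : IsCompact K) (h : Disjoint K (⋂ s : {s : Set X // IsClopen s ∧ x ∈ s}, s)) :
    ∃ s, IsClopen s ∧ x ∈ s ∧ Disjoint K s := by
  obtain ⟨t, ht⟩ := hK.elim_finite_subfamily_closed _ (fun s => s.2.1.isClosed)
    (disjoint_iff_inter_eq_empty.mp h)
  exact ⟨⋂ s ∈ t, s, isClopen_biInter_finset fun s _ => s.2.1,
    mem_iInter₂.mpr fun s _ => s.2.2, disjoint_iff_inter_eq_empty.mpr ht⟩

namespace PrespectralSpace

variable [CompactSpace X] [QuasiSeparatedSpace X] [PrespectralSpace X]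

theorem connectedComponent_eq_iInter_isClopen (x : X) :
    connectedComponent x = ⋂ s : {s : Set X // IsClopen s ∧ x ∈ s}, s := by
  set T := ⋂ s : {s : Set X // IsClopen s ∧ x ∈ s}, (s : Set X)
  refine connectedComponent_subset_iInter_isClopen.antisymm
    (IsPreconnected.subset_connectedComponent ?_ (mem_iInter.2 fun s => s.2.2))
  rw [isPreconnected_iff_subset_of_fully_disjoint_closed (isClosed_iInter fun s => s.2.1.isClosed)]
  intro Z₁ Z₂ hZ₁ hZ₂ hT hZ
  obtain ⟨U₁, hU₁c, hU₁o, hZU₁, hU₁Z⟩ := exists_isCompact_and_isOpen_between hZ₁.isCompact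
    hZ₂.isOpen_compl hZ.subset_compl_right
  obtain ⟨U₂, hU₂c, hU₂o, hZU₂, hU₂Z⟩ := exists_isCompact_and_isOpen_between hZ₂.isCompact
    hZ₁.isOpen_compl hZ.subset_compl_left
  -- By quasi-separatedness `U₁ ∩ U₂` is compact, so some clopen `s ∋ x` lies in `U₁ ∪ U₂` and
  -- misses `U₁ ∩ U₂`; then `s ∩ U₁` and `s ∩ U₂` are clopen.
  have hUT : Disjoint ((U₁ ∩ U₂) ∪ (U₁ ∪ U₂)ᶜ) T := by
    refine disjoint_right.mpr fun t ht => ?_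
    rcases hT ht with h | h
    · rintro (⟨-, h'⟩ | h')
      exacts [hU₂Z h' h, h' (Or.inl (hZU₁ h))]
    · rintro (⟨h', -⟩ | h')
      exacts [hU₁Z h' h, h' (Or.inr (hZU₂ h))]
  obtain ⟨s, hs, hxs, hsK⟩ := IsCompact.exists_isClopen_disjoint_of_disjoint_iInter_isClopen
    ((QuasiSeparatedSpace.inter_isCompact _ _ hU₁o hU₁c hU₂o hU₂c).union
      (hU₁o.union hU₂o).isClosed_compl.isCompact) hUT
  have hcover : s ⊆ U₁ ∪ U₂ := fun y hy => not_not.mp fun h => disjoint_left.mp hsK (Or.inr h) hy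
  have hinter : s ∩ U₁ ∩ U₂ = ∅ :=
    eq_empty_of_forall_notMem fun y ⟨⟨hy, h₁⟩, h₂⟩ => disjoint_left.mp hsK (Or.inl ⟨h₁, h₂⟩) hy
  have hTsub {A : Set X} (hA : IsClopen (s ∩ A)) (hxA : x ∈ A) : T ⊆ A :=
    (iInter_subset _ ⟨s ∩ A, hA, hxs, hxA⟩).trans inter_subset_right
  rcases hcover hxs with hx | hx
  · have hTU := hTsub (isClopen_inter_of_disjoint_cover_clopen' hs hcover hU₁o hU₂o hinter) hx
    exact Or.inl fun t ht => (hT ht).resolve_right (hU₁Z (hTU ht))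
  · have hTU := hTsub (isClopen_inter_of_disjoint_cover_clopen' hs (union_comm U₁ U₂ ▸ hcover)
      hU₂o hU₁o (by rwa [inter_right_comm])) hx
    exact Or.inr fun t ht => (hT ht).resolve_left (hU₂Z (hTU ht))

theorem _root_.IsCompact.exists_isClopen_disjoint_of_disjoint_connectedComponent {K : Set X}
    {x : X} (hK : IsCompact K) (h : Disjoint K (connectedComponent x)) :
    ∃ s, IsClopen s ∧ x ∈ s ∧ Disjoint K s :=
  hK.exists_isClopen_disjoint_of_disjoint_iInter_isClopen
    (connectedComponent_eq_iInter_isClopen x ▸ h)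

theorem exists_isClopen_subset_of_connectedComponent_subset {U : Set X} {x : X} (hU : IsOpen U)
    (h : connectedComponent x ⊆ U) : ∃ s, IsClopen s ∧ x ∈ s ∧ s ⊆ U := by
  obtain ⟨s, hs, hxs, hUs⟩ := hU.isClosed_compl.isCompact
    |>.exists_isClopen_disjoint_of_disjoint_connectedComponent
      (disjoint_compl_left_iff_subset.mpr h)
  exact ⟨s, hs, hxs, disjoint_compl_left_iff_subset.mp hUs⟩

instance totallySeparatedSpace_connectedComponents :
    TotallySeparatedSpace (ConnectedComponents X) := by
  refine totallySeparatedSpace_iff_exists_isClopen.mpr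
    (ConnectedComponents.surjective_coe.forall₂.2 fun x y hxy => ?_)
  obtain ⟨s, hs, hxs, hys⟩ := isClosed_connectedComponent.isCompact
    |>.exists_isClopen_disjoint_of_disjoint_connectedComponent
    (connectedComponent_disjoint (ConnectedComponents.coe_ne_coe.mp hxy).symm)
  have hsat : ((↑) : X → ConnectedComponents X) ⁻¹' ((↑) '' s) = s := by
    rw [connectedComponents_preimage_image, hs.biUnion_connectedComponent_eq]
  refine ⟨(↑) '' s, ?_, mem_image_of_mem _ hxs, ?_⟩
  · rwa [← ConnectedComponents.isQuotientMap_coe.isClopen_preimage, hsat]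
  · rw [mem_compl_iff, ← mem_preimage, hsat]
    exact disjoint_left.mp hys mem_connectedComponent

end PrespectralSpace

theorem exists_continuous_sigma_section_iff {ι : Type*} (U : ι → Set X) :
    (∃ s : X → Σ i, U i, Continuous s ∧ ∀ x, ((s x).2 : X) = x) ↔
      ∃ k : X → ι, IsLocallyConstant k ∧ ∀ x, x ∈ U (k x) := by
  constructor
  · rintro ⟨s, hs, hsx⟩
    exact ⟨fun x => (s x).1, IsLocallyConstant.iff_isOpen_fiber.mpr fun i =>
      (isOpen_sigma_fst_preimage {i}).preimage hs, fun x => by simpa [hsx] using (s x).2.2⟩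
  · rintro ⟨k, hk, hkx⟩
    refine ⟨fun x => ⟨k x, x, hkx x⟩, continuous_iff_continuousAt.mpr fun x => ?_, fun _ => rfl⟩
    have hfiber : ContinuousOn (fun y => (⟨k y, y, hkx y⟩ : Σ i, U i)) (k ⁻¹' {k x}) := by
      have hincl : Continuous fun y : k ⁻¹' {k x} =>
          (⟨y, congrArg (fun j => (y : X) ∈ U j) y.2 ▸ hkx y⟩ : U (k x)) := by fun_prop
      rw [continuousOn_iff_continuous_domRestrict]
      exact (continuous_sigmaMk (σ := fun i => U i) (i := k x)).comp hincl |>.congr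
        fun y => Sigma.subtype_ext y.2.symm rfl
    exact hfiber.continuousAt ((hk.isOpen_fiber (k x)).mem_nhds rfl)

theorem exists_isLocallyConstant_mem_of_forall_isClopen_subset [CompactSpace X] {ι : Type*}
    {U : ι → Set X} (h : ∀ x, ∃ i s, IsClopen s ∧ x ∈ s ∧ s ⊆ U i) :
    ∃ k : X → ι, IsLocallyConstant k ∧ ∀ x, x ∈ U (k x) := by
  choose i s hs hxs hsU using h
  obtain ⟨t, ht⟩ := isCompact_univ.elim_finite_subcover s (fun x => (hs x).isOpen)
    fun x _ => mem_iUnion.mpr ⟨x, hxs x⟩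
  -- which of the finitely many clopens `s y`, `y ∈ t`, contain `x` is locally constant in `x`
  let v : X → {p : t → Bool // ∃ y, p y = true} := fun x =>
    ⟨fun y => (s y).boolIndicator x, by
      obtain ⟨y, hy, hxy⟩ := mem_iUnion₂.mp (ht (mem_univ x))
      exact ⟨⟨y, hy⟩, (mem_iff_boolIndicator _ _).mp hxy⟩⟩
  have hv : IsLocallyConstant v := .desc _ Subtype.val
    ((IsLocallyConstant.iff_continuous _).mpr
      (continuous_pi fun y => (continuous_boolIndicator_iff_isClopen _).mpr (hs y)))
    Subtype.val_injective
  exact ⟨fun x => i (v x).2.choose, hv.comp fun p => i p.2.choose,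
    fun x => hsU _ ((mem_iff_boolIndicator _ _).mpr (v x).2.choose_spec)⟩

end General

section SplitCovers

variable {X : Type u} [TopologicalSpace X]

theorem splitsOpenCovers_iff : SplitsOpenCovers X ↔ ∀ (ι : Type u) (U : ι → Set X),
    (∀ i, IsOpen (U i)) → ⋃ i, U i = univ → ∃ k : X → ι, IsLocallyConstant k ∧ ∀ x, x ∈ U (k x) :=
  forall₄_congr fun _ U _ _ => exists_continuous_sigma_section_iff U

theorem SplitsOpenCovers.eq_of_mem_connectedComponent (hX : SplitsOpenCovers X) {x y : X}
    (hx : IsClosed {x}) (hy : IsClosed {y}) (hxy : y ∈ connectedComponent x) : y = x := by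
  by_contra hne
  obtain ⟨k, hk, hkx⟩ := splitsOpenCovers_iff.mp hX (ULift Bool)
    (fun b => bif b.down then {x}ᶜ else {y}ᶜ)
    (by rintro ⟨_ | _⟩; exacts [hy.isOpen_compl, hx.isOpen_compl])
    (eq_univ_of_forall fun z => mem_iUnion.mpr <| by
      by_cases hz : z = x
      exacts [⟨⟨false⟩, by simp [hz, Ne.symm hne]⟩, ⟨⟨true⟩, by simp [hz]⟩])
  -- `k` is constant on the component of `x`, but neither open set contains both `x` and `y`
  have hkxy : k y = k x :=
    hk.apply_eq_of_isPreconnected isPreconnected_connectedComponent hxy mem_connectedComponent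
  have hx' := hkx x
  have hy' := hkx y
  rw [hkxy] at hy'
  cases h : (k x).down <;> simp_all

theorem SplitsOpenCovers.existsUnique_closedPoint [T0Space X] [CompactSpace X]
    (hX : SplitsOpenCovers X) (x : X) :
    ∃! y, y ∈ connectedComponent x ∧ y ∈ spectrumClosedPoints X := by
  obtain ⟨y, hxy, hy⟩ := exists_specializes_isClosed_singleton x
  have hyx : y ∈ connectedComponent x :=
    hxy.mem_closed isClosed_connectedComponent mem_connectedComponent
  refine ⟨y, ⟨hyx, hy⟩, fun z ⟨hz, hzc⟩ => ?_⟩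
  exact hX.eq_of_mem_connectedComponent hy hzc (connectedComponent_eq hyx ▸ hz)

theorem splitsOpenCovers_of_existsUnique_closedPoint [T0Space X] [CompactSpace X]
    [QuasiSeparatedSpace X] [PrespectralSpace X]
    (h : ∀ x : X, ∃! y, y ∈ connectedComponent x ∧ y ∈ spectrumClosedPoints X) :
    SplitsOpenCovers X := by
  refine splitsOpenCovers_iff.mpr fun ι U hU hcov =>
    exists_isLocallyConstant_mem_of_forall_isClopen_subset fun x => ?_
  obtain ⟨y, -, hy⟩ := h x
  obtain ⟨i, hyi⟩ := mem_iUnion.mp (hcov ▸ mem_univ y)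
  -- every point of the component specializes to its unique closed point `y ∈ U i`
  have hsub : connectedComponent x ⊆ U i := fun z hz => by
    obtain ⟨w, hzw, hw⟩ := exists_specializes_isClosed_singleton z
    have hwy : w = y := hy w ⟨hzw.mem_closed isClosed_connectedComponent hz, hw⟩
    exact hzw.mem_open (hU i) (hwy ▸ hyi)
  exact ⟨i, PrespectralSpace.exists_isClopen_subset_of_connectedComponent_subset (hU i) hsub⟩

theorem isHomeomorph_connectedComponentsMk_of_existsUnique_closedPoint [CompactSpace X]
    [QuasiSeparatedSpace X] [PrespectralSpace X] (hc : IsClosed (spectrumClosedPoints X))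
    (h : ∀ x : X, ∃! y, y ∈ connectedComponent x ∧ y ∈ spectrumClosedPoints X) :
    IsHomeomorph fun x : spectrumClosedPoints X => ConnectedComponents.mk (x : X) := by
  have : CompactSpace (spectrumClosedPoints X) := isCompact_iff_compactSpace.mp hc.isCompact
  refine isHomeomorph_iff_continuous_bijective.mpr
    ⟨ConnectedComponents.continuous_coe.comp continuous_subtype_val, fun a b hab => ?_,
      ConnectedComponents.surjective_coe.forall.2 fun x => ?_⟩
  · exact Subtype.ext ((h a).unique ⟨mem_connectedComponent, a.2⟩
      ⟨ConnectedComponents.coe_eq_coe'.mp hab.symm, b.2⟩)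
  · obtain ⟨y, ⟨hy, hyc⟩, -⟩ := h x
    exact ⟨⟨y, hyc⟩, ConnectedComponents.coe_eq_coe'.mpr hy⟩

end SplitCovers

/-- For `X = Spec A`: the set of closed points `X^c` is closed and all open
covers of `X` split iff `X^c` is closed and every connected component of `X` contains exactly one
closed point; moreover, in this case the composite `X^c ↪ X → π₀(X)` is a homeomorphism. -/
theorem wLocal_spectrum_characterization (A : Type u) [CommRing A] :
    ((IsClosed (spectrumClosedPoints (PrimeSpectrum A)) ∧ SplitsOpenCovers (PrimeSpectrum A)) ↔
      (IsClosed (spectrumClosedPoints (PrimeSpectrum A)) ∧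
        ∀ x : PrimeSpectrum A, ∃! y : PrimeSpectrum A,
          y ∈ connectedComponent x ∧ y ∈ spectrumClosedPoints (PrimeSpectrum A))) ∧
    ((IsClosed (spectrumClosedPoints (PrimeSpectrum A)) ∧ SplitsOpenCovers (PrimeSpectrum A)) →
      IsHomeomorph (fun x : spectrumClosedPoints (PrimeSpectrum A) =>
        (ConnectedComponents.mk (x : PrimeSpectrum A)))) :=
  ⟨and_congr_right' ⟨fun hs => hs.existsUnique_closedPoint,
      splitsOpenCovers_of_existsUnique_closedPoint⟩,
    fun ⟨hc, hs⟩ =>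
      isHomeomorph_connectedComponentsMk_of_existsUnique_closedPoint hc hs.existsUnique_closedPoint⟩
end

section
/- Let A be a w-local commutative ring and let I be the Jacobson radical of A (the intersection of all maximal ideals). Then a prime ideal of A contains I if and only if it is maximal; equivalently, the zero locus V(I) ⊆ Spec A is exactly the set of closed points of Spec A. Consequently the quotient ring A/I is absolutely flat: it is reduced, every prime ideal of A/I is maximal, and every A/I-module is flat. -/
universe u

open TensorProduct

/-- A map of commutative rings (presented here as an algebra `A → B`) is *weakly étale* if it is
flat and the multiplication map `B ⊗[A] B → B` makes `B` into a flat `B ⊗[A] B`-module. -/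
def WeaklyEtale (A B : Type u) [CommRing A] [CommRing B] [Algebra A B] : Prop :=
  Module.Flat A B ∧
    (letI : Algebra (B ⊗[A] B) B :=
        (Algebra.TensorProduct.lmul' (S := B) A).toRingHom.toAlgebra
     Module.Flat (B ⊗[A] B) B)

/-- A presentation of the `A`-algebra `C` as a filtered colimit of étale `A`-algebras. -/
structure IndEtalePresentation (A C : Type u) [CommRing A] [CommRing C] [Algebra A C] where
  ι : Type u
  [pre : Preorder ι]
  [dir : IsDirected ι (· ≤ ·)]
  [nonempty : Nonempty ι]
  G : ι → Type u
  [commRing : ∀ i, CommRing (G i)]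
  [alg : ∀ i, Algebra A (G i)]
  trans : ∀ i j, i ≤ j → (G i →ₐ[A] G j)
  toC : ∀ i, G i →ₐ[A] C
  etale : ∀ i, Algebra.Etale A (G i)
  trans_id : ∀ i (h : i ≤ i) (x : G i), trans i i h x = x
  trans_comp : ∀ i j k (hij : i ≤ j) (hjk : j ≤ k) (x : G i),
    trans j k hjk (trans i j hij x) = trans i k (hij.trans hjk) x
  compat : ∀ i j (h : i ≤ j) (x : G i), toC j (trans i j h x) = toC i x
  jointly_surjective : ∀ c : C, ∃ (i : ι) (x : G i), toC i x = c
  eq_locus : ∀ i (x y : G i), toC i x = toC i y → ∃ j, ∃ h : i ≤ j, trans i j h x = trans i j h y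

/-- An `A`-algebra `C` is *ind-étale* if it is a filtered colimit of étale `A`-algebras. -/
def IndEtale (A C : Type u) [CommRing A] [CommRing C] [Algebra A C] : Prop :=
  Nonempty (IndEtalePresentation A C)

/-- A commutative ring is *w-local* if the set of closed points (i.e. maximal ideals) of its
prime spectrum is closed, and every connected component of the prime spectrum contains exactly
one closed point. -/
def WLocal (A : Type u) [CommRing A] : Prop :=
  IsClosed {p : PrimeSpectrum A | p.asIdeal.IsMaximal} ∧
    ∀ x : PrimeSpectrum A, ∃! y : PrimeSpectrum A,
      y ∈ connectedComponent x ∧ y.asIdeal.IsMaximal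

/-- A commutative ring is *w-contractible* if every faithfully flat weakly étale algebra over it
admits a section. -/
def WContractible (A : Type u) [CommRing A] : Prop :=
  ∀ (B : Type u) [CommRing B] [Algebra A B],
    Module.FaithfullyFlat A B → WeaklyEtale A B → Nonempty (B →ₐ[A] A)

/-- A commutative ring is *w-strictly local* if it is w-local and every faithfully flat étale
algebra over it admits a section. -/
def WStrictlyLocal (A : Type u) [CommRing A] : Prop :=
  WLocal A ∧
    ∀ (B : Type u) [CommRing B] [Algebra A B],
      Module.FaithfullyFlat A B → Algebra.Etale A B → Nonempty (B →ₐ[A] A)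

/-- A local ring is *strictly henselian* if it is henselian and its residue field is separably
closed. -/
def IsStrictlyHenselian (R : Type u) [CommRing R] [IsLocalRing R] : Prop :=
  HenselianLocalRing R ∧ IsSepClosed (IsLocalRing.ResidueField R)

/-- A commutative ring is *absolutely flat* if every module over it is flat. -/
def AbsolutelyFlat (A : Type u) [CommRing A] : Prop :=
  ∀ (M : Type u) [AddCommGroup M] [Module A M], Module.Flat A M

variable {R : Type*} [CommRing R]

lemma aux_vnr [IsReduced R] (hmax : ∀ p : Ideal R, p.IsPrime → p.IsMaximal) (a : R) :
    ∃ b, a * a * b = a := by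
  have key : Ideal.span {a} ⊔ (Ideal.span {a} : Ideal R).annihilator = ⊤ := by
    by_contra h
    obtain ⟨m, hm, hle⟩ := Ideal.exists_le_maximal _ h
    haveI := hm
    have ha_m : a ∈ m := hle (Submodule.mem_sup_left (Ideal.subset_span rfl))
    have h0 : algebraMap R (Localization.AtPrime m) a = 0 := by
      have hnil : IsNilpotent (algebraMap R (Localization.AtPrime m) a) := by
        rw [← mem_nilradical, nilradical_eq_sInf, Ideal.mem_sInf]
        intro q hq
        haveI := hq
        have hcom : (q.comap (algebraMap R (Localization.AtPrime m))).IsPrime :=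
          hq.comap _
        have hsub : q.comap (algebraMap R (Localization.AtPrime m)) ≤ m := by
          intro x hx
          by_contra hxm
          have hu : IsUnit (algebraMap R (Localization.AtPrime m) x) :=
            IsLocalization.map_units (Localization.AtPrime m) (⟨x, hxm⟩ : m.primeCompl)
          exact hq.ne_top (q.eq_top_of_isUnit_mem hx hu)
        have heq := (hmax _ hcom).eq_of_le hm.ne_top hsub
        have hmem : a ∈ q.comap (algebraMap R (Localization.AtPrime m)) := by
          rw [heq]; exact ha_m
        exact Ideal.mem_comap.mp hmem
      exact hnil.eq_zero
    obtain ⟨s, hs⟩ := (IsLocalization.map_eq_zero_iff m.primeCompl (Localization.AtPrime m) a).mp h0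
    have hsann : (s : R) ∈ (Ideal.span {a} : Ideal R).annihilator := by
      rw [Submodule.mem_annihilator]
      rintro n hn
      obtain ⟨c, rfl⟩ := Ideal.mem_span_singleton'.mp hn
      rw [smul_eq_mul]
      calc (s : R) * (c * a) = c * ((s : R) * a) := by ring
        _ = 0 := by rw [hs, mul_zero]
    exact s.2 (hle (Submodule.mem_sup_right hsann))
  obtain ⟨c, hc, y, hy, h1⟩ := Submodule.mem_sup.mp (key ▸ Submodule.mem_top (x := (1 : R)))
  obtain ⟨x, hx⟩ := Ideal.mem_span_singleton'.mp hc
  have hy0 : y * a = 0 := by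
    have := Submodule.mem_annihilator.mp hy a (Ideal.subset_span rfl)
    simpa [smul_eq_mul] using this
  refine ⟨x, ?_⟩
  have h2 : a * (c + y) = a := by rw [h1, mul_one]
  rw [mul_add, ← hx] at h2
  calc a * a * x = a * (x * a) + a * y - a * y := by ring
    _ = a - a * y := by rw [h2]
    _ = a := by rw [mul_comm a y, hy0, sub_zero]

lemma aux_exists_idem (hv : ∀ a : R, ∃ b, a * a * b = a) (I : Ideal R) (hI : I.FG) :
    ∃ e : R, e * e = e ∧ I = Ideal.span {e} := by
  classical
  obtain ⟨s, rfl⟩ := hI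
  induction s using Finset.induction_on with
  | empty => exact ⟨0, by ring, by rw [Finset.coe_empty, Ideal.span_empty, Ideal.span_singleton_eq_bot.mpr rfl]⟩
  | @insert a s ha ih =>
    obtain ⟨f, hf, hspan⟩ := ih
    obtain ⟨b, hb⟩ := hv a
    have he₁ : (a * b) * (a * b) = a * b := by linear_combination b * hb
    have hsa : Ideal.span ({a} : Set R) = Ideal.span {a * b} := by
      apply le_antisymm
      · exact Ideal.span_singleton_le_span_singleton.mpr ⟨a, by linear_combination -hb⟩
      · exact Ideal.span_singleton_le_span_singleton.mpr ⟨b, rfl⟩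
    refine ⟨a * b + f - a * b * f, ?_, ?_⟩
    · linear_combination (1 + f * f - 2 * f) * he₁ + (1 - a * b) * hf
    · rw [Finset.coe_insert, Ideal.span_insert, hsa, hspan]
      apply le_antisymm
      · apply sup_le
        · exact Ideal.span_singleton_le_span_singleton.mpr
            ⟨a * b, by linear_combination (f - 1) * he₁⟩
        · exact Ideal.span_singleton_le_span_singleton.mpr
            ⟨f, by linear_combination (a * b - 1) * hf⟩
      · rw [Ideal.span_le, Set.singleton_subset_iff]
        have h1 : (a * b) * (1 - f) ∈ Ideal.span ({a * b} : Set R) ⊔ Ideal.span {f} :=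
          Submodule.mem_sup_left (Ideal.mem_span_singleton'.mpr ⟨1 - f, by ring⟩)
        have h2 : f ∈ Ideal.span ({a * b} : Set R) ⊔ Ideal.span {f} :=
          Submodule.mem_sup_right (Ideal.mem_span_singleton'.mpr ⟨1, by ring⟩)
        have h3 := Submodule.add_mem _ h1 h2
        have : (a * b) * (1 - f) + f = a * b + f - a * b * f := by ring
        rw [this] at h3
        exact h3

lemma aux_flat (hv : ∀ a : R, ∃ b, a * a * b = a) (M : Type*) [AddCommGroup M] [Module R M] :
    Module.Flat R M := by
  rw [Module.Flat.iff_rTensor_injective]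
  intro I hI
  obtain ⟨e, he, rfl⟩ := aux_exists_idem hv I hI
  set I : Ideal R := Ideal.span {e} with hIdef
  let π : R →ₗ[R] I :=
    { toFun := fun x => ⟨x * e, Ideal.mem_span_singleton'.mpr ⟨x, rfl⟩⟩
      map_add' := fun x y => Subtype.ext (add_mul x y e)
      map_smul' := fun c x => Subtype.ext (by simp [smul_eq_mul, mul_assoc]) }
  have hid : π ∘ₗ I.subtype = LinearMap.id := by
    refine LinearMap.ext ?_
    rintro ⟨y, hy⟩
    obtain ⟨c, rfl⟩ := Ideal.mem_span_singleton'.mp hy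
    exact Subtype.ext (by show c * e * e = c * e; rw [mul_assoc, he])
  have hcomp : (LinearMap.rTensor M π) ∘ₗ (LinearMap.rTensor M I.subtype) = LinearMap.id := by
    rw [← LinearMap.rTensor_comp, hid, LinearMap.rTensor_id]
  intro x y hxy
  have h1 := LinearMap.congr_fun hcomp x
  have h2 := LinearMap.congr_fun hcomp y
  simp only [LinearMap.comp_apply, LinearMap.id_apply] at h1 h2
  rw [← h1, ← h2, hxy]

lemma aux_vanish (A : Type*) [CommRing A] :
    PrimeSpectrum.vanishingIdeal {x : PrimeSpectrum A | x.asIdeal.IsMaximal} =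
      (⊥ : Ideal A).jacobson := by
  apply le_antisymm
  · rw [Ideal.jacobson]
    refine le_sInf ?_
    rintro J ⟨-, hJ⟩ r hr
    exact (PrimeSpectrum.mem_vanishingIdeal _ _).mp hr ⟨J, hJ.isPrime⟩ hJ
  · intro r hr
    rw [PrimeSpectrum.mem_vanishingIdeal]
    intro x hx
    exact Ideal.mem_sInf.mp hr ⟨bot_le, hx⟩

/-- If `A` is w-local with Jacobson radical `I`, then a prime of `A` contains
`I` iff it is maximal (equivalently `V(I)` is the set of closed points of `Spec A`), and the
quotient `A ⧸ I` is absolutely flat: it is reduced, all of its primes are maximal, and all of its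
modules are flat. -/
theorem wLocal_jacobson_quotient (A : Type u) [CommRing A] (hA : WLocal A) :
    (∀ p : Ideal A, p.IsPrime → (((⊥ : Ideal A).jacobson ≤ p) ↔ p.IsMaximal)) ∧
    (PrimeSpectrum.zeroLocus (((⊥ : Ideal A).jacobson : Ideal A) : Set A) =
      {x : PrimeSpectrum A | x.asIdeal.IsMaximal}) ∧
    IsReduced (A ⧸ (⊥ : Ideal A).jacobson) ∧
    (∀ q : Ideal (A ⧸ (⊥ : Ideal A).jacobson), q.IsPrime → q.IsMaximal) ∧
    AbsolutelyFlat (A ⧸ (⊥ : Ideal A).jacobson) := by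
  obtain ⟨hclosed, -⟩ := hA
  have hzl : PrimeSpectrum.zeroLocus (((⊥ : Ideal A).jacobson : Ideal A) : Set A) =
      {x : PrimeSpectrum A | x.asIdeal.IsMaximal} := by
    rw [← aux_vanish A, PrimeSpectrum.zeroLocus_vanishingIdeal_eq_closure, hclosed.closure_eq]
  have h1 : ∀ p : Ideal A, p.IsPrime → (((⊥ : Ideal A).jacobson ≤ p) ↔ p.IsMaximal) := by
    intro p hp
    constructor
    · intro hle
      have hm : (⟨p, hp⟩ : PrimeSpectrum A) ∈
          PrimeSpectrum.zeroLocus (((⊥ : Ideal A).jacobson : Ideal A) : Set A) :=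
        (PrimeSpectrum.mem_zeroLocus _ _).mpr hle
      rw [hzl] at hm
      exact hm
    · intro hmax
      rw [Ideal.jacobson]
      exact sInf_le ⟨bot_le, hmax⟩
  have hred : IsReduced (A ⧸ (⊥ : Ideal A).jacobson) :=
    (Ideal.isRadical_iff_quotient_reduced _).mp (Ideal.isRadical_jacobson ⊥)
  have hmax : ∀ q : Ideal (A ⧸ (⊥ : Ideal A).jacobson), q.IsPrime → q.IsMaximal := by
    intro q hq
    have hcom : (q.comap (Ideal.Quotient.mk _)).IsPrime := hq.comap _
    have hle : (⊥ : Ideal A).jacobson ≤ q.comap (Ideal.Quotient.mk _) := by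
      conv_lhs => rw [← Ideal.mk_ker (I := (⊥ : Ideal A).jacobson)]
      exact Ideal.ker_le_comap _
    have hcmax := (h1 _ hcom).mp hle
    have hma := Ideal.map_eq_top_or_isMaximal_of_surjective (Ideal.Quotient.mk ((⊥ : Ideal A).jacobson)) Ideal.Quotient.mk_surjective hcmax
    rw [Ideal.map_comap_of_surjective (Ideal.Quotient.mk ((⊥ : Ideal A).jacobson)) Ideal.Quotient.mk_surjective] at hma
    rcases hma with h | h
    · exact absurd h hq.ne_top
    · exact h
  refine ⟨h1, hzl, hred, hmax, ?_⟩
  intro M _ _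
  haveI := hred
  exact aux_flat (fun a => aux_vnr hmax a) M
end

section
/- Let (C, J) be a Grothendieck site whose category of sheaves of sets is replete. Then countable products of epimorphisms are epimorphisms: for any families of sheaves (F_n) and (G_n) indexed by ℕ and epimorphisms f_n : F_n → G_n for each n, the induced map ∏_n F_n → ∏_n G_n between the products is an epimorphism. -/
universe v u

open CategoryTheory CategoryTheory.Limits Opposite

/-- The category of sheaves of sets on a site is *replete* if for every `ℕᵒᵖ`-indexed tower of
sheaves all of whose transition maps are epimorphisms, the projection from the limit of the tower
to each of its terms is an epimorphism. -/
def RepleteSheaves {C : Type u} [Category.{v} C] (J : GrothendieckTopology C) : Prop :=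
  ∀ F : ℕᵒᵖ ⥤ Sheaf J (Type max u v),
    (∀ n : ℕ, Epi (F.map (homOfLE (Nat.le_succ n)).op)) →
    ∀ (c : Cone F), IsLimit c → ∀ n : ℕ, Epi (c.π.app (op n))

/-!
Let `X n` be the product of `F k` for `k < n` and of `G k` for `k ≥ n`, with transition map
`X (n + 1) ⟶ X n` applying `f n` in the `n`-th factor. That map is the base change of `f n` along
the projection `X n ⟶ G n`, so it is an epimorphism: epimorphisms of sheaves of types are the
locally surjective morphisms, and these are stable under base change. The limit of the tower is
`∏ F k`, and its projection to `X 0 = ∏ G k` is `∏ f k`, which repleteness makes an epimorphism.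
-/

universe w

instance Sheaf.isStableUnderBaseChange_epimorphisms {C : Type u} [Category.{v} C]
    (J : GrothendieckTopology C) [HasSheafify J (Type w)] :
    (MorphismProperty.epimorphisms (Sheaf J (Type w))).IsStableUnderBaseChange where
  of_isPullback {X Y Y' S f g f' g'} sq hg := by
    simp only [MorphismProperty.epimorphisms.iff, ← Sheaf.isLocallySurjective_iff_epi] at hg ⊢
    constructor
    intro U x
    refine J.superset_covering ?_ (Presheaf.imageSieve_mem J g.hom (f.hom.app _ x))
    rintro V p ⟨y, hy⟩
    have sqV := sq.map (sheafToPresheaf J _ ⋙ (evaluation _ _).obj (op V))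
    obtain ⟨z, -, hz⟩ := Types.exists_of_isPullback sqV y (X.obj.map p.op x)
      (by simpa [NatTrans.naturality_apply] using hy)
    exact ⟨z, hz⟩

section

variable {D : Type*} [Category D]

lemma isPullback_π_pi_map {ι : Type*} {X Y : ι → D} [HasProduct X] [HasProduct Y]
    (g : ∀ i, X i ⟶ Y i) (n : ι) (hg : ∀ i, i ≠ n → IsIso (g i)) :
    IsPullback (Pi.π X n) (Limits.Pi.map g) (g n) (Pi.π Y n) := by
  classical
  refine .of_isLimit' ⟨by simp⟩ (PullbackCone.IsLimit.mk _
    (fun s => Pi.lift fun i => if h : i = n then s.fst ≫ eqToHom (by rw [h]) else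
      have := hg i h; s.snd ≫ Pi.π Y i ≫ inv (g i))
    (fun s => by simp) (fun s => ?_) (fun s m h₁ h₂ => ?_))
  · ext i
    by_cases h : i = n
    · subst h; simp [s.condition]
    · have := hg i h; simp [h]
  · ext i
    by_cases h : i = n
    · subst h; simp [← h₁]
    · have := hg i h; simp [h, ← h₂]

section Pi

variable {K : Type*} [Category K] {ι : Type*} (P : ι → K ⥤ D)
  [∀ k, HasProduct fun i => (P i).obj k]

noncomputable abbrev piFunctor : K ⥤ D where
  obj k := ∏ᶜ fun i => (P i).obj k
  map φ := Limits.Pi.map fun i => (P i).map φ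

variable {P} (c : ∀ i, Cone (P i)) (cP : Fan fun i => (c i).pt)

noncomputable abbrev piCone : Cone (piFunctor P) where
  pt := cP.pt
  π.app k := Pi.lift fun i => cP.proj i ≫ (c i).π.app k
  π.naturality k l φ := Limits.Pi.hom_ext _ _ fun i => by simp

noncomputable def isLimitPiCone (hc : ∀ i, IsLimit (c i)) (hP : IsLimit cP) :
    IsLimit (piCone c cP) where
  lift s := Fan.IsLimit.lift hP fun i => (hc i).lift
    ⟨s.pt, { app k := s.π.app k ≫ Pi.π _ i
             naturality k l φ := by simpa using (s.w φ =≫ Pi.π _ i).symm }⟩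
  fac s k := Limits.Pi.hom_ext _ _ fun i => by simp
  uniq s m hm := Fan.IsLimit.hom_ext hP _ _ fun i => (hc i).hom_ext fun k => by
    simp [← hm k]

end Pi

/-- `switchAt k` sends `n` to `0` if `k < n` and to `1` otherwise: composed with an arrow
`X ⟶ Y`, viewed as a functor `Fin 2 ⥤ D`, it is the tower which is `Y` up to stage `k` and `X`
from stage `k + 1` on. -/
def switchAt (k : ℕ) : ℕᵒᵖ ⥤ Fin 2 where
  obj n := if k < n.unop then 0 else 1
  map φ := homOfLE (by have := leOfHom φ.unop; split_ifs <;> first | decide | omega)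

instance (k : ℕ) : (switchAt k).Initial :=
  Functor.initial_of_exists_of_isCofiltered _
    (fun _ => ⟨op (k + 1), ⟨homOfLE (by simp [switchAt])⟩⟩)
    (fun _ _ => ⟨_, 𝟙 _, Subsingleton.elim _ _⟩)

lemma isIso_switchAt_comp_map (A : Fin 2 ⥤ D) {k n : ℕ} (h : k ≠ n) :
    IsIso ((switchAt k ⋙ A).map (homOfLE (Nat.le_succ n)).op) := by
  have hobj : (switchAt k).obj (op (n + 1)) = (switchAt k).obj (op n) := by
    simp only [switchAt]; split_ifs <;> omega
  rw [Functor.comp_map, Subsingleton.elim ((switchAt k).map _) (eqToHom hobj)]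
  infer_instance

noncomputable abbrev switchAtCone (A : Fin 2 ⥤ D) (k : ℕ) : Cone (switchAt k ⋙ A) :=
  (coneOfDiagramInitial isInitialBot A).whisker (switchAt k)

noncomputable def isLimitSwitchAtCone (A : Fin 2 ⥤ D) (k : ℕ) : IsLimit (switchAtCone A k) :=
  (Functor.Initial.isLimitWhiskerEquiv _ _).symm (limitOfDiagramInitial _ _)

lemma epi_mk₁_map {X Y : D} (f : X ⟶ Y) [Epi f] {i j : Fin 2} (φ : i ⟶ j) :
    Epi ((ComposableArrows.mk₁ f).map φ) := by
  obtain rfl | ⟨rfl, rfl⟩ : i = j ∨ i = 0 ∧ j = 1 := by have := leOfHom φ; omega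
  · rw [Subsingleton.elim φ (𝟙 _), CategoryTheory.Functor.map_id]; infer_instance
  · exact ‹Epi f›

section Tower

variable [HasProductsOfShape ℕ D] {F G : ℕ → D} (f : ∀ n, F n ⟶ G n)

noncomputable abbrev productTower : ℕᵒᵖ ⥤ D :=
  piFunctor fun k => switchAt k ⋙ ComposableArrows.mk₁ (f k)

lemma epi_productTower_map [(MorphismProperty.epimorphisms D).IsStableUnderBaseChange]
    (hf : ∀ n, Epi (f n)) (n : ℕ) : Epi ((productTower f).map (homOfLE (Nat.le_succ n)).op) := by
  have := hf n
  exact MorphismProperty.IsStableUnderBaseChange.of_isPullback (P := .epimorphisms _)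
    (isPullback_π_pi_map _ n fun k hk => isIso_switchAt_comp_map _ hk)
    (epi_mk₁_map _ ((switchAt n).map (homOfLE (Nat.le_succ n)).op))

noncomputable abbrev productTowerCone (cF : Cone (Discrete.functor F)) : Cone (productTower f) :=
  piCone (fun k => switchAtCone _ k) cF

noncomputable def isLimitProductTowerCone {cF : Cone (Discrete.functor F)} (hF : IsLimit cF) :
    IsLimit (productTowerCone f cF) :=
  isLimitPiCone _ _ (fun _ => isLimitSwitchAtCone _ _) hF

-- Stage `0` of the tower is `∏ᶜ G` definitionally, as `k < 0` reduces to `false`.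
noncomputable def productTowerObjZeroIso {cG : Cone (Discrete.functor G)} (hG : IsLimit cG) :
    (productTower f).obj (op 0) ≅ cG.pt :=
  (productIsProduct G).conePointUniqueUpToIso hG

lemma productTowerCone_π_zero_comp (cF : Cone (Discrete.functor F))
    {cG : Cone (Discrete.functor G)} (hG : IsLimit cG) :
    (productTowerCone f cF).π.app (op 0) ≫ (productTowerObjZeroIso f hG).hom =
      IsLimit.map cF hG (Discrete.natTrans fun n => f n.as) := by
  refine hG.hom_ext fun ⟨k⟩ => ?_
  have hπ : (productTowerObjZeroIso f hG).hom ≫ cG.π.app ⟨k⟩ = Pi.π _ k :=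
    IsLimit.conePointUniqueUpToIso_hom_comp _ _ (Discrete.mk k)
  rw [Category.assoc, hπ, IsLimit.map_π]
  erw [Pi.lift_π]
  rfl

end Tower

end

/-- In a replete topos of sheaves, a countable product of epimorphisms is an
epimorphism. -/
theorem replete_countable_prod_epi {C : Type u} [Category.{v} C] (J : GrothendieckTopology C)
    (hrep : RepleteSheaves J)
    (F G : ℕ → Sheaf J (Type max u v)) (f : ∀ n, F n ⟶ G n) (hf : ∀ n, Epi (f n))
    (cF : Cone (Discrete.functor F)) (hF : IsLimit cF)
    (cG : Cone (Discrete.functor G)) (hG : IsLimit cG) :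
    Epi (IsLimit.map cF hG (Discrete.natTrans fun n => f n.as)) := by
  have := hrep _ (epi_productTower_map f hf) _ (isLimitProductTowerCone f hF) 0
  rw [← productTowerCone_π_zero_comp f cF hG]
  infer_instance
end

section
/- Let X = βℕ be the Stone–Čech compactification of the natural numbers with the discrete topology, and let Z = X \ ℕ be the complement of the image of the canonical embedding ℕ → βℕ. Then Z is a closed subset of X, and Z with the subspace topology is not extremally disconnected. -/
open Set Filter Topology

noncomputable section

private lemma cont_pure : Continuous (pure : ℕ → Ultrafilter ℕ) :=
  continuous_of_discreteTopology

/-- the extension of `pure` -/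
private def scToU : StoneCech ℕ → Ultrafilter ℕ := stoneCechExtend cont_pure

private def uToSc : Ultrafilter ℕ → StoneCech ℕ := Ultrafilter.extend stoneCechUnit

private lemma scToU_unit (n : ℕ) : scToU (stoneCechUnit n) = pure n :=
  congrFun (stoneCechExtend_extends cont_pure) n

private lemma uToSc_pure (n : ℕ) : uToSc (pure n) = stoneCechUnit n :=
  congrFun (ultrafilter_extend_extends stoneCechUnit) n

private lemma cont_scToU : Continuous scToU := continuous_stoneCechExtend _

private lemma cont_uToSc : Continuous uToSc := continuous_ultrafilter_extend _

private lemma scToU_uToSc : scToU ∘ uToSc = id := by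
  apply denseRange_pure.equalizer (cont_scToU.comp cont_uToSc) continuous_id
  funext n
  simp [Function.comp, uToSc_pure, scToU_unit]

private lemma uToSc_scToU : uToSc ∘ scToU = id := by
  apply stoneCech_hom_ext (cont_uToSc.comp cont_scToU) continuous_id
  funext n
  simp [Function.comp, uToSc_pure, scToU_unit]

/-- homeomorphism between `StoneCech ℕ` and `Ultrafilter ℕ` -/
private def scHomeo : StoneCech ℕ ≃ₜ Ultrafilter ℕ where
  toFun := scToU
  invFun := uToSc
  left_inv x := congrFun uToSc_scToU x
  right_inv y := congrFun scToU_uToSc y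
  continuous_toFun := cont_scToU
  continuous_invFun := cont_uToSc

private lemma isOpen_range_pure : IsOpen (Set.range (pure : ℕ → Ultrafilter ℕ)) := by
  have : Set.range (pure : ℕ → Ultrafilter ℕ) = ⋃ n, {u : Ultrafilter ℕ | {n} ∈ u} := by
    ext u
    simp only [mem_range, mem_iUnion, mem_setOf_eq]
    constructor
    · rintro ⟨n, rfl⟩; exact ⟨n, singleton_mem_pure⟩
    · rintro ⟨n, hn⟩
      obtain ⟨x, hx, rfl⟩ := Ultrafilter.eq_pure_of_finite_mem (finite_singleton n) hn
      exact ⟨x, rfl⟩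
  rw [this]
  exact isOpen_iUnion fun n => ultrafilter_isOpen_basic _

private lemma range_unit_eq : Set.range (stoneCechUnit : ℕ → StoneCech ℕ)
    = scToU ⁻¹' (Set.range (pure : ℕ → Ultrafilter ℕ)) := by
  ext x
  constructor
  · rintro ⟨n, rfl⟩; exact ⟨n, (scToU_unit n).symm⟩
  · rintro ⟨n, hn⟩
    refine ⟨n, ?_⟩
    have : uToSc (scToU x) = x := congrFun uToSc_scToU x
    rw [← this, ← hn, uToSc_pure]

private lemma part1 : IsClosed ((Set.range (stoneCechUnit : ℕ → StoneCech ℕ))ᶜ) := by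
  rw [isClosed_compl_iff, range_unit_eq]
  exact isOpen_range_pure.preimage cont_scToU



open Set Filter Topology


/-- index map: `m` belongs to fiber `(Nat.unpair m).1` -/
private def idx (m : ℕ) : ℕ := (Nat.unpair m).1

/-- fibers partitioning ℕ -/
private def Afib (n : ℕ) : Set ℕ := idx ⁻¹' {n}

private lemma Afib_infinite (n : ℕ) : (Afib n).Infinite := by
  apply Set.infinite_of_injective_forall_mem (f := fun k : ℕ => Nat.pair n k)
    (hi := fun a b h => by
      have := congrArg (fun m => (Nat.unpair m).2) h
      simpa using this)
  intro k
  simp [Afib, idx, Nat.unpair_pair]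

private lemma Afib_disj {n m : ℕ} (h : n ≠ m) : Afib n ∩ Afib m = ∅ := by
  ext x
  simp only [Afib, mem_inter_iff, mem_preimage, mem_singleton_iff, mem_empty_iff_false,
    iff_false, not_and]
  intro h1 h2
  exact h (h1 ▸ h2 ▸ rfl)

/-- The filter of sets whose trace on all but finitely many fibers is cofinite in the fiber. -/
private def Gfil : Filter ℕ where
  sets := {E | {n | (Afib n \ E).Infinite}.Finite}
  univ_sets := by
    have : {n | (Afib n \ (univ : Set ℕ)).Infinite} = ∅ := by
      ext n; simp [Set.diff_eq_empty.mpr (subset_univ _)]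
    simp [this]
  sets_of_superset := by
    intro E F hE hEF
    apply hE.subset
    intro n hn
    exact hn.mono (diff_subset_diff_right hEF)
  inter_sets := by
    intro E F hE hF
    apply (hE.union hF).subset
    intro n hn
    have : Afib n \ (E ∩ F) = (Afib n \ E) ∪ (Afib n \ F) := by
      ext x; simp [mem_diff]; tauto
    simp only [mem_setOf_eq, this] at hn
    simp only [Set.mem_union, mem_setOf_eq]
    exact Set.infinite_union.mp hn

private lemma mem_Gfil {E : Set ℕ} : E ∈ Gfil ↔ {n | (Afib n \ E).Infinite}.Finite := Iff.rfl

private instance Gfil_neBot : Gfil.NeBot := by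
  rw [Filter.neBot_iff]
  intro h
  have h0 : (∅ : Set ℕ) ∈ Gfil := by rw [h]; trivial
  rw [mem_Gfil] at h0
  have : {n | (Afib n \ (∅ : Set ℕ)).Infinite} = univ := by
    ext n; simpa using Afib_infinite n
  rw [this] at h0
  exact Set.infinite_univ h0

/-- our distinguished ultrafilter -/
private def uStar : Ultrafilter ℕ := Ultrafilter.of Gfil

private lemma mem_uStar_of_Gfil {E : Set ℕ} (hE : E ∈ Gfil) : E ∈ uStar :=
  Ultrafilter.of_le Gfil hE

/-- sets with all fiber traces finite are not in `uStar` -/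
private lemma notMem_uStar {D : Set ℕ} (hD : ∀ n, (D ∩ Afib n).Finite) : D ∉ uStar := by
  have hDc : Dᶜ ∈ Gfil := by
    rw [mem_Gfil]
    have : {n | (Afib n \ Dᶜ).Infinite} = ∅ := by
      ext n
      simp only [mem_setOf_eq, mem_empty_iff_false, iff_false]
      rw [Set.not_infinite, Set.diff_eq, compl_compl]
      exact (hD n).subset (by intro x hx; exact ⟨hx.2, hx.1⟩)
    rw [this]; exact finite_empty
  have := mem_uStar_of_Gfil hDc
  exact fun hD' => (Ultrafilter.compl_mem_iff_notMem.mp this) hD'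


private lemma exists_infinite_trace {E : Set ℕ} (hE : E ∈ uStar) :
    ∃ n, (E ∩ Afib n).Infinite := by
  by_contra h
  push_neg at h
  exact notMem_uStar h hE

private lemma uStar_not_pure : ∀ n, uStar ≠ pure n := by
  intro n h
  have : {n} ∈ uStar := by rw [h]; exact singleton_mem_pure
  exact notMem_uStar (fun m => (finite_singleton n).subset inter_subset_left) this

private lemma idx_image_infinite {E : Set ℕ} (hE : E ∈ uStar) : (idx '' E).Infinite := by
  intro hfin
  have hc : Eᶜ ∈ Gfil := by
    rw [mem_Gfil]
    apply hfin.subset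
    intro n hn
    rcases hn.nonempty with ⟨x, hx⟩
    exact ⟨x, not_not.mp hx.2, hx.1⟩
  exact Ultrafilter.compl_mem_iff_notMem.mp (mem_uStar_of_Gfil hc) hE

private lemma exists_selector {E : Set ℕ} (hE : (idx '' E).Infinite) :
    ∃ S : Set ℕ, S ⊆ E ∧ S.Infinite ∧ ∀ n, (S ∩ Afib n).Finite := by
  haveI : Infinite ↥(idx '' E) := hE.to_subtype
  choose g hg1 hg2 using fun t : ↥(idx '' E) => (t.2 : (t : ℕ) ∈ idx '' E)
  refine ⟨Set.range g, ?_, ?_, ?_⟩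
  · rintro x ⟨t, rfl⟩; exact hg1 t
  · apply Set.infinite_range_of_injective
    intro a b h
    have h2 := congrArg idx h
    rw [hg2, hg2] at h2
    exact Subtype.ext h2
  · intro n
    apply Set.Subsingleton.finite
    rintro x ⟨⟨t1, rfl⟩, hx⟩ y ⟨⟨t2, rfl⟩, hy⟩
    have h1 : (t1 : ℕ) = n := by rw [← hg2 t1]; exact hx
    have h2 : (t2 : ℕ) = n := by rw [← hg2 t2]; exact hy
    rw [Subtype.ext (h1.trans h2.symm)]

private def Kset (E : Set ℕ) : Set (Ultrafilter ℕ) := {v | E ∈ v}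

private def Sopen : Set (Ultrafilter ℕ) := ⋃ n, Kset (Afib n)

private def Zrem : Set (Ultrafilter ℕ) := (Set.range (pure : ℕ → Ultrafilter ℕ))ᶜ

private lemma exists_basic {O : Set (Ultrafilter ℕ)} (hO : IsOpen O) {v : Ultrafilter ℕ}
    (hv : v ∈ O) : ∃ E ∈ v, Kset E ⊆ O := by
  obtain ⟨t, ⟨E, rfl⟩, hvt, htO⟩ := ultrafilterBasis_is_basis.exists_subset_of_mem_open hv hO
  exact ⟨E, hvt, htO⟩

private lemma exists_nonprincipal_mem {s : Set ℕ} (hs : s.Infinite) :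
    ∃ w : Ultrafilter ℕ, s ∈ w ∧ w ∈ Zrem := by
  haveI := hs.cofinite_inf_principal_neBot
  refine ⟨Ultrafilter.of (cofinite ⊓ 𝓟 s),
    Ultrafilter.of_le _ (mem_inf_of_right (mem_principal_self s)), ?_⟩
  rintro ⟨k, hk⟩
  have h1 : {k}ᶜ ∈ Ultrafilter.of (cofinite ⊓ 𝓟 s) :=
    Ultrafilter.of_le _ (mem_inf_of_left ((Set.finite_singleton k).compl_mem_cofinite))
  have h2 : {k} ∈ Ultrafilter.of (cofinite ⊓ 𝓟 s) := by
    rw [← hk]; exact singleton_mem_pure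
  exact Ultrafilter.compl_mem_iff_notMem.mp h1 h2

private lemma not_ed_remainder : ¬ ExtremallyDisconnected ↥Zrem := by
  intro hED
  set U : Set ↥Zrem := Subtype.val ⁻¹' Sopen with hU
  have hUopen : IsOpen U :=
    (isOpen_iUnion fun n => ultrafilter_isOpen_basic (Afib n)).preimage continuous_subtype_val
  have hqZ : uStar ∈ Zrem := by rintro ⟨k, hk⟩; exact uStar_not_pure k hk.symm
  have hqU : (⟨uStar, hqZ⟩ : ↥Zrem) ∈ closure U := by
    rw [closure_subtype, hU, Subtype.image_preimage_coe, mem_closure_iff]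
    intro O hO huO
    obtain ⟨E, hEu, hKE⟩ := exists_basic hO huO
    obtain ⟨n, hn⟩ := exists_infinite_trace hEu
    obtain ⟨w, hws, hwZ⟩ := exists_nonprincipal_mem hn
    have hwE : E ∈ w := mem_of_superset hws inter_subset_left
    have hwA : Afib n ∈ w := mem_of_superset hws inter_subset_right
    exact ⟨w, hKE hwE, hwZ, mem_iUnion.mpr ⟨n, hwA⟩⟩
  have hqVc : (⟨uStar, hqZ⟩ : ↥Zrem) ∈ closure ((closure U)ᶜ) := by
    rw [closure_subtype, mem_closure_iff]
    intro O hO huO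
    obtain ⟨E, hEu, hKE⟩ := exists_basic hO huO
    obtain ⟨S, hSE, hSinf, hStr⟩ := exists_selector (idx_image_infinite hEu)
    obtain ⟨w, hwS, hwZ⟩ := exists_nonprincipal_mem hSinf
    have hwE : E ∈ w := mem_of_superset hwS hSE
    refine ⟨w, hKE hwE, ⟨⟨w, hwZ⟩, ?_, rfl⟩⟩
    intro hmem
    rw [closure_subtype, hU, Subtype.image_preimage_coe, mem_closure_iff] at hmem
    obtain ⟨v, hvK, hvZ, hvS⟩ := hmem (Kset S) (ultrafilter_isOpen_basic S) hwS
    obtain ⟨n, hvA⟩ := mem_iUnion.mp hvS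
    have hfin : S ∩ Afib n ∈ v := inter_mem hvK hvA
    obtain ⟨x, _, hxv⟩ := Ultrafilter.eq_pure_of_finite_mem (hStr n) hfin
    exact hvZ ⟨x, hxv.symm⟩
  have hCopen : IsOpen (closure U) := ExtremallyDisconnected.open_closure U hUopen
  rw [mem_closure_iff] at hqVc
  obtain ⟨z, hz1, hz2⟩ := hqVc (closure U) hCopen hqU
  exact hz2 hz1



private lemma homeo_image_range :
    ⇑scHomeo ∘ (stoneCechUnit : ℕ → StoneCech ℕ) = (pure : ℕ → Ultrafilter ℕ) :=
  funext fun n => scToU_unit n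

/-- The complement `Z = βℕ \ ℕ` of the image of the canonical embedding
`ℕ → βℕ` into the Stone–Čech compactification of the discrete space `ℕ` is closed, but `Z` is not
extremally disconnected. -/
theorem stoneCech_nat_remainder_not_extremallyDisconnected :
    IsClosed ((Set.range (stoneCechUnit : ℕ → StoneCech ℕ))ᶜ) ∧
      ¬ ExtremallyDisconnected
          (((Set.range (stoneCechUnit : ℕ → StoneCech ℕ))ᶜ : Set (StoneCech ℕ))) := by
  refine ⟨part1, ?_⟩
  intro hED
  have himg : ⇑scHomeo '' ((Set.range (stoneCechUnit : ℕ → StoneCech ℕ))ᶜ) = Zrem := by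
    rw [Set.image_compl_eq scHomeo.bijective, ← Set.range_comp, homeo_image_range]; rfl
  have e2 : ↥((Set.range (stoneCechUnit : ℕ → StoneCech ℕ))ᶜ) ≃ₜ ↥Zrem :=
    (scHomeo.image _).trans (Homeomorph.setCongr himg)
  exact not_ed_remainder (extremallyDisconnected_of_homeo e2)

end
end

section
/- Let S be a topological space and let (X_n, f_n : X_{n+1} → X_n) be an inverse system of sets indexed by ℕ satisfying the Mittag-Leffler condition. Endow each X_n with the discrete topology. Then the inverse system whose n-th term is the set of continuous maps S → X_n, with transition maps given by postcomposition with f_n, also satisfies the Mittag-Leffler condition. -/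
universe u v w

/-- The composite transition map `X (n + k) → X n` of an `ℕ`-indexed inverse system. -/
def invSysComp {X : ℕ → Type u} (f : ∀ n, X (n + 1) → X n) (n : ℕ) :
    ∀ k, X (n + k) → X n
  | 0 => id
  | k + 1 => fun x => invSysComp f n k (f (n + k) x)

/-- The Mittag-Leffler condition for an `ℕ`-indexed inverse system of sets: for every `n` the
images of the maps `X m → X n` (for `m ≥ n`) stabilize. -/
def MittagLeffler {X : ℕ → Type u} (f : ∀ n, X (n + 1) → X n) : Prop :=
  ∀ n : ℕ, ∃ k₀ : ℕ, ∀ k, k₀ ≤ k →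
    Set.range (invSysComp f n k) = Set.range (invSysComp f n k₀)

/-- If `(X n, f n)` is a Mittag-Leffler inverse system of discrete topological
spaces and `S` is any topological space, then the inverse system of sets of continuous maps
`C(S, X n)`, with transition maps given by postcomposition, is again Mittag-Leffler. -/
theorem mittagLeffler_continuousMaps {S : Type u} [TopologicalSpace S] {X : ℕ → Type v}
    [∀ n, TopologicalSpace (X n)] [∀ n, DiscreteTopology (X n)]
    (f : ∀ n, X (n + 1) → X n) (hML : MittagLeffler f) :
    MittagLeffler (X := fun n => C(S, X n)) (fun n (g : C(S, X (n + 1))) =>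
      (⟨f n ∘ g, continuous_of_discreteTopology.comp g.continuous⟩ : C(S, X n))) := by
  set F : ∀ n, C(S, X (n + 1)) → C(S, X n) := fun n (g : C(S, X (n + 1))) =>
    (⟨f n ∘ g, continuous_of_discreteTopology.comp g.continuous⟩ : C(S, X n)) with hF
  have hptw : ∀ n k (g : C(S, X (n + k))) (s : S),
      invSysComp (X := fun n => C(S, X n)) F n k g s = invSysComp f n k (g s) := by
    intro n k
    induction k with
    | zero => intro g s; rfl
    | succ k ih => intro g s; exact ih (F (n + k) g) s
  intro n
  obtain ⟨k₀, hk₀⟩ := hML n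
  refine ⟨k₀, fun k hk => ?_⟩
  have hset := hk₀ k hk
  ext h
  simp only [Set.mem_range]
  constructor
  · rintro ⟨g, rfl⟩
    have hex : ∀ a : X (n + k), ∃ b : X (n + k₀),
        invSysComp f n k₀ b = invSysComp f n k a := by
      intro a
      have : invSysComp f n k a ∈ Set.range (invSysComp f n k₀) := hset ▸ ⟨a, rfl⟩
      exact this
    choose w hw using hex
    refine ⟨⟨w ∘ g, continuous_of_discreteTopology.comp g.continuous⟩, ?_⟩
    ext s
    rw [hptw, hptw]
    exact hw (g s)
  · rintro ⟨g, rfl⟩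
    have hex : ∀ a : X (n + k₀), ∃ b : X (n + k),
        invSysComp f n k b = invSysComp f n k₀ a := by
      intro a
      have : invSysComp f n k₀ a ∈ Set.range (invSysComp f n k) := hset.symm ▸ ⟨a, rfl⟩
      exact this
    choose w hw using hex
    refine ⟨⟨w ∘ g, continuous_of_discreteTopology.comp g.continuous⟩, ?_⟩
    ext s
    rw [hptw, hptw]
    exact hw (g s)
end

section
/- Let (G_n, h_n : G_{n+1} → G_n) be an inverse system of groups indexed by ℕ and let (X_n, f_n : X_{n+1} → X_n) be an inverse system of nonempty sets such that each X_n carries a transitive action of G_n and each transition map is equivariant: f_n(g • x) = h_n(g) • f_n(x) for all g ∈ G_{n+1}, x ∈ X_{n+1}. If the system (G_n) satisfies the Mittag-Leffler condition, then the system (X_n) satisfies the Mittag-Leffler condition and the inverse limit lim_n X_n is nonempty. -/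
universe u v w

section auxLemmas
variable {X : ℕ → Type v} (f : ∀ n, X (n + 1) → X n)

lemma invSysComp_antitone (n : ℕ) : ∀ {k k'}, k ≤ k' →
    Set.range (invSysComp f n k') ⊆ Set.range (invSysComp f n k) := by
  intro k k' hkk'
  induction hkk' with
  | refl => exact le_refl _
  | step h ih =>
    refine subset_trans ?_ ih
    rintro _ ⟨x, rfl⟩
    exact ⟨f _ x, rfl⟩

lemma invSys_f_cast {a b : ℕ} (e : a = b) (x : X (a + 1)) :
    f b (_root_.cast (congrArg (fun t => X (t + 1)) e) x) =
      _root_.cast (congrArg X e) (f a x) := by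
  subst e; rfl

lemma invSysComp_left_peel : ∀ (k n : ℕ) (x : X (n + 1 + k)),
    f n (invSysComp f (n + 1) k x) =
      invSysComp f n (k + 1) (_root_.cast (congrArg X (Nat.add_right_comm n 1 k)) x) := by
  intro k
  induction k with
  | zero =>
    intro n x
    show f n x = f n (_root_.cast _ x)
    congr 1
  | succ k ih =>
    intro n x
    show f n (invSysComp f (n + 1) k (f (n + 1 + k) x)) = _
    rw [ih n (f (n + 1 + k) x)]
    show invSysComp f n (k + 1) _ = invSysComp f n (k + 1) (f (n + k + 1) (_root_.cast _ x))
    congr 1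
    have e : n + 1 + k = n + k + 1 := Nat.add_right_comm n 1 k
    have := invSys_f_cast f e x
    rw [← this]

variable {G : ℕ → Type u} [∀ n, Group (G n)] [∀ n, MulAction (G n) (X n)]
  (h : ∀ n, G (n + 1) →* G n)

lemma invSysComp_equivariant
    (hequiv : ∀ n (g : G (n + 1)) (x : X (n + 1)), f n (g • x) = h n g • f n x)
    (n : ℕ) : ∀ (k : ℕ) (g : G (n + k)) (x : X (n + k)),
    invSysComp f n k (g • x) =
      invSysComp (fun m => ⇑(h m)) n k g • invSysComp f n k x := by
  intro k
  induction k with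
  | zero => intro g x; rfl
  | succ k ih =>
    intro g x
    show invSysComp f n k (f (n + k) (g • x)) = _
    rw [hequiv (n + k) g x, ih]
    rfl

lemma invSysComp_range_eq_orbit
    (htrans : ∀ n, MulAction.IsPretransitive (G n) (X n))
    (hequiv : ∀ n (g : G (n + 1)) (x : X (n + 1)), f n (g • x) = h n g • f n x)
    (n k : ℕ) {y : X n} (hy : y ∈ Set.range (invSysComp f n k)) :
    Set.range (invSysComp f n k) =
      {w | ∃ s ∈ Set.range (invSysComp (fun m => ⇑(h m)) n k), w = s • y} := by
  obtain ⟨x₀, rfl⟩ := hy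
  ext w
  constructor
  · rintro ⟨x, rfl⟩
    obtain ⟨g, rfl⟩ := (htrans (n + k)).exists_smul_eq x₀ x
    exact ⟨invSysComp (fun m => ⇑(h m)) n k g, ⟨g, rfl⟩,
      (invSysComp_equivariant f h hequiv n k g x₀)⟩
  · rintro ⟨_, ⟨g, rfl⟩, rfl⟩
    exact ⟨g • x₀, invSysComp_equivariant f h hequiv n k g x₀⟩

end auxLemmas

/-- Let `(G n, h n)` be a Mittag-Leffler inverse system of groups and
`(X n, f n)` a compatible inverse system of nonempty transitive `G n`-sets. Then `(X n, f n)` is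
Mittag-Leffler and the inverse limit of the `X n` is nonempty. -/
theorem mittagLeffler_of_transitive_action {G : ℕ → Type u} [∀ n, Group (G n)]
    {X : ℕ → Type v} [∀ n, MulAction (G n) (X n)]
    (h : ∀ n, G (n + 1) →* G n) (f : ∀ n, X (n + 1) → X n)
    (htrans : ∀ n, MulAction.IsPretransitive (G n) (X n))
    (hne : ∀ n, Nonempty (X n))
    (hequiv : ∀ n (g : G (n + 1)) (x : X (n + 1)), f n (g • x) = h n g • f n x)
    (hML : MittagLeffler (X := G) (fun n => ⇑(h n))) :
    MittagLeffler f ∧ ∃ x : ∀ n, X n, ∀ n, f n (x (n + 1)) = x n := by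
  have hMLX : MittagLeffler f := by
    intro n
    obtain ⟨k₀, hk₀⟩ := hML n
    refine ⟨k₀, fun k hk => ?_⟩
    refine le_antisymm (invSysComp_antitone f n hk) ?_
    obtain ⟨x₁⟩ := hne (n + k)
    have hy₁k : invSysComp f n k x₁ ∈ Set.range (invSysComp f n k) := ⟨x₁, rfl⟩
    have hy₁k₀ : invSysComp f n k x₁ ∈ Set.range (invSysComp f n k₀) :=
      invSysComp_antitone f n hk hy₁k
    rw [invSysComp_range_eq_orbit f h htrans hequiv n k hy₁k,
      invSysComp_range_eq_orbit f h htrans hequiv n k₀ hy₁k₀, hk₀ k hk]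
  refine ⟨hMLX, ?_⟩
  -- stable images
  set k₀ : ℕ → ℕ := fun n => (hMLX n).choose with hk₀def
  have hk₀ : ∀ n k, k₀ n ≤ k →
      Set.range (invSysComp f n k) = Set.range (invSysComp f n (k₀ n)) :=
    fun n => (hMLX n).choose_spec
  have surj : ∀ n (y : X n), y ∈ Set.range (invSysComp f n (k₀ n)) →
      ∃ z, z ∈ Set.range (invSysComp f (n + 1) (k₀ (n + 1))) ∧ f n z = y := by
    intro n y hy
    set m := max (k₀ n) (k₀ (n + 1)) with hm
    have h1 : y ∈ Set.range (invSysComp f n (m + 1)) := by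
      rw [hk₀ n (m + 1) (le_trans (le_max_left _ _) (Nat.le_succ m))]
      exact hy
    obtain ⟨w, rfl⟩ := h1
    refine ⟨invSysComp f (n + 1) m
      (_root_.cast (congrArg X (Nat.add_right_comm n 1 m).symm) w), ?_, ?_⟩
    · rw [← hk₀ (n + 1) m (le_max_right _ _)]
      exact ⟨_, rfl⟩
    · rw [invSysComp_left_peel f m n]
      congr 1
      rw [cast_cast, cast_eq]
  choose next hnextmem hnextf using surj
  obtain ⟨x₀⟩ := hne (0 + k₀ 0)
  let s : ∀ n, {p : X n // p ∈ Set.range (invSysComp f n (k₀ n))} := fun n =>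
    Nat.rec ⟨invSysComp f 0 (k₀ 0) x₀, ⟨x₀, rfl⟩⟩
      (fun n p => ⟨next n p.1 p.2, hnextmem n p.1 p.2⟩) n
  exact ⟨fun n => (s n).1, fun n => hnextf n (s n).1 (s n).2⟩
end
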